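/- Let d ≥ 2, let Γ ⊂ ℝ^d be the boundary of the unit square (0,1)² embedded in ℝ² × {0}^{d−2}, parametrized counterclockwise by arclength by γ : [0,4] → ℝ^d, and let F := γ̇ H¹|_Γ. Then for every x₁ ∈ (0,1) and s ∈ (0,1), the point x = (x₁, −s, 0, …, 0) satisfies |[I_{d−1} F(x)]₁| ≥ ln(1/s) − 1. -/

import Mathlib

open MeasureTheory Metric ENNReal

/-- The embedding `ℝ² → ℝ^d = ℝ² × ℝ^{d-2}`, `(a,b) ↦ (a, b, 0, …, 0)`. -/
noncomputable def emb (d : ℕ) (a b : ℝ) : EuclideanSpace ℝ (Fin d) :=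
  (EuclideanSpace.equiv (Fin d) ℝ).symm
    (fun j => if (j : ℕ) = 0 then a else if (j : ℕ) = 1 then b else 0)

/-- Arclength parametrization `γ : [0,4] → ℝ^d` of the boundary `Γ` of the unit square
`(0,1)²` embedded in `ℝ² × {0}^{d-2}`, traversed counterclockwise. -/
noncomputable def sqCurve (d : ℕ) (s : ℝ) : EuclideanSpace ℝ (Fin d) :=
  if s ≤ 1 then emb d s 0
  else if s ≤ 2 then emb d 1 (s - 1)
  else if s ≤ 3 then emb d (3 - s) 1
  else emb d 0 (4 - s)

/-- The (piecewise constant) unit tangent `γ̇` of the square curve. -/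
noncomputable def sqTangent (d : ℕ) (s : ℝ) : EuclideanSpace ℝ (Fin d) :=
  if s ≤ 1 then emb d 1 0
  else if s ≤ 2 then emb d 0 1
  else if s ≤ 3 then emb d (-1) 0
  else emb d 0 (-1)

/-- The Riesz potential `I_{d-1} F(x) = ∫ |x-y|^{-1} dF(y)` of the loop measure
`F = γ̇ H¹|_Γ`, computed as the line integral `∫₀⁴ |x - γ(t)|⁻¹ γ̇(t) dt`
(normalizing constant omitted). -/
noncomputable def sqRiesz (d : ℕ) (x : EuclideanSpace ℝ (Fin d)) : EuclideanSpace ℝ (Fin d) :=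
  ∫ s in (0 : ℝ)..4, ‖x - sqCurve d s‖⁻¹ • sqTangent d s

lemma emb_apply (d : ℕ) (a b : ℝ) (j : Fin d) :
    emb d a b j = if (j : ℕ) = 0 then a else if (j : ℕ) = 1 then b else 0 := rfl

lemma emb_sub (d : ℕ) (a b c e : ℝ) : emb d a b - emb d c e = emb d (a-c) (b-e) := by
  ext j
  simp [emb_apply]
  split_ifs <;> ring

lemma norm_emb (d : ℕ) (hd : 2 ≤ d) (a b : ℝ) : ‖emb d a b‖ = Real.sqrt (a^2+b^2) := by
  rw [EuclideanSpace.norm_eq]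
  congr 1
  have h01 : (⟨0, by omega⟩ : Fin d) ≠ ⟨1, by omega⟩ := by simp [Fin.ext_iff]
  have : ∀ j : Fin d, ‖emb d a b j‖^2 =
      (if j = ⟨0, by omega⟩ then a^2 else 0) + (if j = ⟨1, by omega⟩ then b^2 else 0) := by
    intro j
    rcases eq_or_ne j ⟨0, by omega⟩ with h | h
    · simp [h, emb_apply, h01, sq_abs]
    · rcases eq_or_ne j ⟨1, by omega⟩ with h2 | h2
      · simp [h2, emb_apply, sq_abs]
      · have hj0 : (j:ℕ) ≠ 0 := by simpa [Fin.ext_iff] using h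
        have hj1 : (j:ℕ) ≠ 1 := by simpa [Fin.ext_iff] using h2
        simp [emb_apply, hj0, hj1, h, h2]
  simp only [this, Finset.sum_add_distrib, Finset.sum_ite_eq', Finset.mem_univ, if_true]

lemma continuous_emb (d : ℕ) (f g : ℝ → ℝ) (hf : Continuous f) (hg : Continuous g) :
    Continuous (fun t => emb d (f t) (g t)) := by
  unfold emb
  refine Continuous.comp ?_ ?_
  · exact (PiLp.continuousLinearEquiv 2 ℝ (fun _ : Fin d => ℝ)).symm.continuous
  · refine continuous_pi fun j => ?_
    by_cases h0 : (j:ℕ) = 0 <;> by_cases h1 : (j:ℕ) = 1 <;> simp [h0, h1, hf, hg, continuous_const]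

lemma measurable_sqCurve (d : ℕ) : Measurable (sqCurve d) := by
  unfold sqCurve
  refine Measurable.ite (measurableSet_le measurable_id measurable_const)
    ((continuous_emb d _ _ continuous_id continuous_const).measurable) ?_
  refine Measurable.ite (measurableSet_le measurable_id measurable_const)
    ((continuous_emb d _ _ continuous_const (by continuity)).measurable) ?_
  exact Measurable.ite (measurableSet_le measurable_id measurable_const)
    ((continuous_emb d _ _ (by continuity) continuous_const).measurable)
    ((continuous_emb d _ _ continuous_const (by continuity)).measurable)

lemma measurable_sqTangent (d : ℕ) : Measurable (sqTangent d) := by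
  unfold sqTangent
  refine Measurable.ite (measurableSet_le measurable_id measurable_const) measurable_const ?_
  refine Measurable.ite (measurableSet_le measurable_id measurable_const) measurable_const ?_
  exact Measurable.ite (measurableSet_le measurable_id measurable_const) measurable_const
    measurable_const

lemma intInt_of_bounded {E : Type*} [NormedAddCommGroup E] {f : ℝ → E} {a b C : ℝ} (hab : a ≤ b)
    (hm : AEStronglyMeasurable f volume) (hb : ∀ t ∈ Set.Icc a b, ‖f t‖ ≤ C) :
    IntervalIntegrable f volume a b := by
  rw [intervalIntegrable_iff_integrableOn_Icc_of_le hab]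
  refine Integrable.mono' (integrable_const C) hm.restrict ?_
  exact (ae_restrict_iff' measurableSet_Icc).mpr (Filter.Eventually.of_forall hb)

set_option maxHeartbeats 2000000 in
/-- For the square loop measure `F = γ̇ H¹|_Γ`, every `x₁ ∈ (0,1)` and
`s ∈ (0,1)`, the point `x = (x₁, -s, 0, …, 0)` satisfies `|[I_{d-1}F(x)]₁| ≥ ln(1/s) - 1`. -/
theorem statement13 (d : ℕ) (hd : 2 ≤ d)
    (x₁ : ℝ) (hx : x₁ ∈ Set.Ioo (0 : ℝ) 1) (s : ℝ) (hs : s ∈ Set.Ioo (0 : ℝ) 1) :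
    Real.log (1 / s) - 1 ≤ |sqRiesz d (emb d x₁ (-s)) ⟨0, by omega⟩| := by
  obtain ⟨hx0, hx1⟩ := hx
  obtain ⟨hs0, hs1⟩ := hs
  have hd0 : 0 < d := by omega
  set i0 : Fin d := ⟨0, hd0⟩ with hi0def
  set x : EuclideanSpace ℝ (Fin d) := emb d x₁ (-s) with hxdef
  set h : ℝ → EuclideanSpace ℝ (Fin d) := fun t => ‖x - sqCurve d t‖⁻¹ • sqTangent d t with hhdef
  set g : ℝ → ℝ := fun t => ‖x - sqCurve d t‖⁻¹ * sqTangent d t i0 with hgdef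
  -- lower bound on distances
  have hnorm : ∀ t ∈ Set.Icc (0:ℝ) 4, s ≤ ‖x - sqCurve d t‖ := by
    intro t ht
    have hsq : s = Real.sqrt (s^2) := (Real.sqrt_sq hs0.le).symm
    unfold sqCurve
    split_ifs with h1 h2 h3
    · rw [hxdef, emb_sub, norm_emb d hd, hsq]
      exact Real.sqrt_le_sqrt (by nlinarith)
    · rw [hxdef, emb_sub, norm_emb d hd, hsq]
      push_neg at h1
      exact Real.sqrt_le_sqrt (by nlinarith)
    · rw [hxdef, emb_sub, norm_emb d hd, hsq]
      exact Real.sqrt_le_sqrt (by nlinarith)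
    · rw [hxdef, emb_sub, norm_emb d hd, hsq]
      have ht4 := ht.2
      exact Real.sqrt_le_sqrt (by nlinarith)
  have hinv : ∀ t ∈ Set.Icc (0:ℝ) 4, ‖x - sqCurve d t‖⁻¹ ≤ s⁻¹ := by
    intro t ht
    exact inv_anti₀ hs0 (hnorm t ht)
  have hinvnn : ∀ t, (0:ℝ) ≤ ‖x - sqCurve d t‖⁻¹ := fun t => by positivity
  -- tangent bounds
  have htan_norm : ∀ t, ‖sqTangent d t‖ ≤ 1 := by
    intro t
    unfold sqTangent
    split_ifs <;> rw [norm_emb d hd] <;> norm_num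
  -- measurability
  have hmeas_g : Measurable g := by
    apply Measurable.mul
    · exact (measurable_const.sub (measurable_sqCurve d)).norm.inv
    · exact (EuclideanSpace.proj i0 : EuclideanSpace ℝ (Fin d) →L[ℝ] ℝ).continuous.measurable.comp (measurable_sqTangent d)
  have hmeas_h : Measurable h := by
    apply Measurable.fun_smul
    · exact (measurable_const.sub (measurable_sqCurve d)).norm.inv
    · exact measurable_sqTangent d
  -- integrability
  have hIntH : IntervalIntegrable h MeasureTheory.volume 0 4 := by
    refine intInt_of_bounded (C := s⁻¹) (by norm_num) hmeas_h.aestronglyMeasurable ?_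
    intro t ht
    rw [hhdef]
    simp only [norm_smul, norm_inv, norm_norm]
    calc ‖x - sqCurve d t‖⁻¹ * ‖sqTangent d t‖ ≤ s⁻¹ * 1 := by
          exact mul_le_mul (hinv t ht) (htan_norm t) (norm_nonneg _) (by positivity)
      _ = s⁻¹ := mul_one _
  have hIntG : IntervalIntegrable g MeasureTheory.volume 0 4 := by
    refine intInt_of_bounded (C := s⁻¹) (by norm_num) hmeas_g.aestronglyMeasurable ?_
    intro t ht
    rw [hgdef]
    have htan1 : |sqTangent d t i0| ≤ 1 := by
      unfold sqTangent
      split_ifs <;> simp [emb_apply, hi0def]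
    simp only [Real.norm_eq_abs, abs_mul, abs_inv, abs_norm]
    calc ‖x - sqCurve d t‖⁻¹ * |sqTangent d t i0| ≤ s⁻¹ * 1 :=
          mul_le_mul (hinv t ht) htan1 (abs_nonneg _) (by positivity)
      _ = s⁻¹ := mul_one _
  have hIntG' : ∀ a b : ℝ, 0 ≤ a → a ≤ b → b ≤ 4 → IntervalIntegrable g MeasureTheory.volume a b := by
    intro a b ha hab hb
    apply hIntG.mono_set
    rw [Set.uIcc_of_le hab, Set.uIcc_of_le (by norm_num)]
    exact Set.Icc_subset_Icc ha hb
  -- component extraction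
  have hkey : sqRiesz d x i0 = ∫ t in (0:ℝ)..4, g t := by
    have hc := (EuclideanSpace.proj i0 : EuclideanSpace ℝ (Fin d) →L[ℝ] ℝ).intervalIntegral_comp_comm hIntH
    unfold sqRiesz
    exact hc.symm
  -- split the integral
  have hg01 := hIntG' 0 1 (by norm_num) (by norm_num) (by norm_num)
  have hg12 := hIntG' 1 2 (by norm_num) (by norm_num) (by norm_num)
  have hg23 := hIntG' 2 3 (by norm_num) (by norm_num) (by norm_num)
  have hg34 := hIntG' 3 4 (by norm_num) (by norm_num) (by norm_num)
  have hg14 := hIntG' 1 4 (by norm_num) (by norm_num) (by norm_num)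
  have hg24 := hIntG' 2 4 (by norm_num) (by norm_num) (by norm_num)
  have hsplit : (∫ t in (0:ℝ)..4, g t) =
      (∫ t in (0:ℝ)..1, g t) + (∫ t in (1:ℝ)..2, g t) + (∫ t in (2:ℝ)..3, g t)
        + (∫ t in (3:ℝ)..4, g t) := by
    rw [← intervalIntegral.integral_add_adjacent_intervals hg01 hg14,
        ← intervalIntegral.integral_add_adjacent_intervals hg12 hg24,
        ← intervalIntegral.integral_add_adjacent_intervals hg23 hg34]
    ring
  -- evaluate pieces
  have e12 : (∫ t in (1:ℝ)..2, g t) = 0 := by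
    rw [intervalIntegral.integral_congr_ae (g := fun _ => (0:ℝ))
      (Filter.Eventually.of_forall ?_)]
    · simp
    · intro t ht
      rw [Set.uIoc_of_le (by norm_num)] at ht
      have h1 : ¬ t ≤ 1 := not_le.mpr ht.1
      simp [hgdef, sqTangent, h1, ht.2, emb_apply, hi0def]
  have e34 : (∫ t in (3:ℝ)..4, g t) = 0 := by
    rw [intervalIntegral.integral_congr_ae (g := fun _ => (0:ℝ))
      (Filter.Eventually.of_forall ?_)]
    · simp
    · intro t ht
      rw [Set.uIoc_of_le (by norm_num)] at ht
      have h1 : ¬ t ≤ 1 := by push_neg; linarith [ht.1]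
      have h2 : ¬ t ≤ 2 := by push_neg; linarith [ht.1]
      have h3 : ¬ t ≤ 3 := not_le.mpr ht.1
      simp [hgdef, sqTangent, h1, h2, h3, emb_apply, hi0def]
  have e01 : (∫ t in (0:ℝ)..1, g t) = ∫ t in (0:ℝ)..1, (Real.sqrt ((x₁-t)^2 + s^2))⁻¹ := by
    apply intervalIntegral.integral_congr_ae
    apply Filter.Eventually.of_forall
    intro t ht
    rw [Set.uIoc_of_le (by norm_num)] at ht
    have h1 : t ≤ 1 := ht.2
    simp only [hgdef, sqCurve, sqTangent, if_pos h1]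
    rw [hxdef, emb_sub, norm_emb d hd]
    have : (-s - 0:ℝ)^2 = s^2 := by ring
    rw [this]
    simp [emb_apply, hi0def]
  have e23 : (∫ t in (2:ℝ)..3, g t)
      = - ∫ t in (2:ℝ)..3, (Real.sqrt ((x₁-(3-t))^2 + (1+s)^2))⁻¹ := by
    rw [← intervalIntegral.integral_neg]
    apply intervalIntegral.integral_congr_ae
    apply Filter.Eventually.of_forall
    intro t ht
    rw [Set.uIoc_of_le (by norm_num)] at ht
    have h1 : ¬ t ≤ 1 := by push_neg; linarith [ht.1]
    have h2 : ¬ t ≤ 2 := not_le.mpr ht.1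
    have h3 : t ≤ 3 := ht.2
    simp only [hgdef, sqCurve, sqTangent, if_neg h1, if_neg h2, if_pos h3]
    rw [hxdef, emb_sub, norm_emb d hd]
    have : (-s - 1:ℝ)^2 = (1+s)^2 := by ring
    rw [this]
    simp [emb_apply, hi0def]
  set A : ℝ := ∫ t in (0:ℝ)..1, (Real.sqrt ((x₁-t)^2 + s^2))⁻¹ with hAdef
  set B : ℝ := ∫ t in (2:ℝ)..3, (Real.sqrt ((x₁-(3-t))^2 + (1+s)^2))⁻¹ with hBdef
  -- bounds on B
  have hBcont : Continuous fun t => (Real.sqrt ((x₁-(3-t))^2 + (1+s)^2))⁻¹ := by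
    apply Continuous.inv₀
    · exact Real.continuous_sqrt.comp (by fun_prop)
    · intro t
      exact ne_of_gt (Real.sqrt_pos.mpr (by nlinarith))
  have hB0 : 0 ≤ B := by
    apply intervalIntegral.integral_nonneg (by norm_num)
    intro u _
    positivity
  have hB1 : B ≤ 1 := by
    have : B ≤ ∫ _t in (2:ℝ)..3, (1:ℝ) := by
      apply intervalIntegral.integral_mono_on (by norm_num)
        (hBcont.intervalIntegrable _ _) intervalIntegrable_const
      intro t _
      have h1 : Real.sqrt 1 ≤ Real.sqrt ((x₁-(3-t))^2 + (1+s)^2) :=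
        Real.sqrt_le_sqrt (by nlinarith)
      rw [Real.sqrt_one] at h1
      exact inv_le_one_of_one_le₀ h1
    rw [intervalIntegral.integral_const, smul_eq_mul] at this
    linarith
  -- lower bound on A
  have hAcont : Continuous fun t => (Real.sqrt ((x₁-t)^2 + s^2))⁻¹ := by
    apply Continuous.inv₀
    · exact Real.continuous_sqrt.comp (by fun_prop)
    · intro t
      exact ne_of_gt (Real.sqrt_pos.mpr (by nlinarith))
  have hCcont : Continuous fun t : ℝ => (|x₁ - t| + s)⁻¹ := by
    apply Continuous.inv₀
    · exact ((continuous_const.sub continuous_id).abs).add continuous_const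
    · intro t
      have := abs_nonneg (x₁ - t)
      intro hc
      nlinarith
  have hCA : (∫ t in (0:ℝ)..1, (|x₁ - t| + s)⁻¹) ≤ A := by
    apply intervalIntegral.integral_mono_on (by norm_num)
      (hCcont.intervalIntegrable _ _) (hAcont.intervalIntegrable _ _)
    intro t _
    apply inv_anti₀ (Real.sqrt_pos.mpr (by nlinarith))
    have hle : Real.sqrt ((x₁-t)^2 + s^2) ≤ Real.sqrt ((|x₁ - t| + s)^2) :=
      Real.sqrt_le_sqrt (by nlinarith [abs_nonneg (x₁ - t), sq_abs (x₁ - t)])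
    rwa [Real.sqrt_sq (by positivity)] at hle
  have hCsplit : (∫ t in (0:ℝ)..1, (|x₁ - t| + s)⁻¹)
      = (∫ t in (0:ℝ)..x₁, (|x₁ - t| + s)⁻¹) + ∫ t in x₁..1, (|x₁ - t| + s)⁻¹ :=
    (intervalIntegral.integral_add_adjacent_intervals
      (hCcont.intervalIntegrable _ _) (hCcont.intervalIntegrable _ _)).symm
  have hC1 : (∫ t in (0:ℝ)..x₁, (|x₁ - t| + s)⁻¹) = Real.log ((x₁+s)/s) := by
    have : (∫ t in (0:ℝ)..x₁, (|x₁ - t| + s)⁻¹) = ∫ t in (0:ℝ)..x₁, ((x₁+s) - t)⁻¹ := by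
      apply intervalIntegral.integral_congr_ae
      apply Filter.Eventually.of_forall
      intro t ht
      rw [Set.uIoc_of_le hx0.le] at ht
      rw [abs_of_nonneg (by linarith [ht.2])]
      ring_nf
    rw [this, intervalIntegral.integral_comp_sub_left (fun u => u⁻¹) (x₁+s)]
    have h1 : x₁ + s - x₁ = s := by ring
    have h2 : x₁ + s - 0 = x₁ + s := by ring
    rw [h1, h2, integral_inv]
    rw [Set.uIcc_of_le (by linarith)]
    intro hmem
    exact absurd hmem.1 (by norm_num; linarith)
  have hC2 : (∫ t in x₁..(1:ℝ), (|x₁ - t| + s)⁻¹) = Real.log ((1-x₁+s)/s) := by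
    have : (∫ t in x₁..(1:ℝ), (|x₁ - t| + s)⁻¹) = ∫ t in x₁..(1:ℝ), (t - (x₁ - s))⁻¹ := by
      apply intervalIntegral.integral_congr_ae
      apply Filter.Eventually.of_forall
      intro t ht
      rw [Set.uIoc_of_le hx1.le] at ht
      rw [abs_of_nonpos (by linarith [ht.1])]
      ring_nf
    rw [this, intervalIntegral.integral_comp_sub_right (fun u => u⁻¹) (x₁ - s)]
    have h1 : x₁ - (x₁ - s) = s := by ring
    have h2 : 1 - (x₁ - s) = 1 - x₁ + s := by ring
    rw [h1, h2, integral_inv]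
    rw [Set.uIcc_of_le (by linarith)]
    intro hmem
    exact absurd hmem.1 (by norm_num; linarith)
  have hlog : Real.log (1/s) ≤ Real.log ((x₁+s)/s) + Real.log ((1-x₁+s)/s) := by
    rw [← Real.log_mul (ne_of_gt (div_pos (by linarith) hs0)) (ne_of_gt (div_pos (by linarith) hs0))]
    apply Real.log_le_log (by positivity)
    rw [div_mul_div_comm, div_le_div_iff₀ (by positivity) (by positivity)]
    nlinarith [mul_nonneg (mul_nonneg hx0.le (sub_pos.mpr hx1).le) hs0.le,
      mul_nonneg (mul_nonneg hs0.le hs0.le) hs0.le]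
  have hA : Real.log (1/s) ≤ A := by
    calc Real.log (1/s) ≤ Real.log ((x₁+s)/s) + Real.log ((1-x₁+s)/s) := hlog
      _ = ∫ t in (0:ℝ)..1, (|x₁ - t| + s)⁻¹ := by rw [hCsplit, hC1, hC2]
      _ ≤ A := hCA
  -- conclude
  have hfinal : sqRiesz d x i0 = A - B := by
    rw [hkey, hsplit, e12, e34, e01, e23]
    ring
  have : sqRiesz d x ⟨0, by omega⟩ = sqRiesz d x i0 := rfl
  rw [this, hfinal]
  calc Real.log (1/s) - 1 ≤ A - B := by linarith
    _ ≤ |A - B| := le_abs_self _
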